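/- For all L-structures M, K, tuples a from M, tuples s from K of the same length as a, tuples t from K of length < μ, and β < α: F^α_{M,a}(F^β_{K,st}, β) = H^α_{M,a}(K, st, β). Moreover, for any L-structure N and tuple b from N of the same length as a: F^α_{M,a} = F^α_{N,b} if and only if H^α_{M,a} = H^α_{N,b}. -/

import Mathlib

noncomputable section

open scoped Classical

/-- A (single-sorted, finitary) signature: function, relation and constant symbols. -/
structure Sig : Type 1 where
  Func : ℕ → Type
  Rel : ℕ → Type
  Const : Type

/-- A `σ`-structure on a carrier `M`: interpretations of all symbols. -/
structure Str (σ : Sig) (M : Type) : Type where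
  fn : ∀ {k : ℕ}, σ.Func k → (Fin k → M) → M
  rel : ∀ {k : ℕ}, σ.Rel k → (Fin k → M) → Prop
  cst : σ.Const → M

/-- The record of truth values of all unnested atomic formulas under all assignments
of their (finitely many) variables into an `n`-tuple: the components record the truth
values of the unnested atomic formulas `vᵢ = vⱼ`, `vᵢ = c`, `R(v̄)` and `f(v̄) = vᵢ`. -/
structure UAInv (σ : Sig) (n : ℕ) : Type where
  eqv : Fin n → Fin n → Prop
  cst : σ.Const → Fin n → Prop
  rel : ∀ k : ℕ, σ.Rel k → (Fin k → Fin n) → Prop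
  fnc : ∀ k : ℕ, σ.Func k → (Fin k → Fin n) → Fin n → Prop

/-- `I_{M,ā}`: the truth values in `M` of all unnested atomic formulas with variables
interpreted by entries of the tuple `ā`. -/
def uaInv {σ : Sig} {M : Type} (I : Str σ M) {n : ℕ} (a : Fin n → M) : UAInv σ n where
  eqv i j := a i = a j
  cst c i := a i = I.cst c
  rel _ R g := I.rel R (fun i => a (g i))
  fnc _ f g i := I.fn f (fun j => a (g j)) = a i

/-- A point of the domain of the invariant functions `H^α_{M,ā}` (besides the
`I_{M,ā}` part): a structure `K` together with a tuple `s̄t̄` of length `n + m`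
(`s̄` of the length `n` of `ā` and `t̄` of finite length `m`). -/
structure HKey (σ : Sig) (n : ℕ) : Type 1 where
  K : Type
  IK : Str σ K
  m : ℕ
  st : Fin (n + m) → K

/-- The invariant functions `H^α_{M,ā}`, represented as the pair consisting of
`I_{M,ā}` together with the map sending `((K, s̄t̄), β)` with `β < α` to the value
(`some true`/`some false` for `1`/`0`) of `H^α_{M,ā}(K, s̄t̄, β)`, and `none` outside
the domain.  `H^{β+1}_{M,ā}(K, s̄t̄, β) = 1` iff there is a tuple `c̄` in `M` of the
length of `t̄` with `H^β_{M,āc̄} = H^β_{K,s̄t̄}`; the restriction property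
`H^α_{M,ā} ↾ β = H^β_{M,ā}` holds by construction. -/
noncomputable def Hfun {σ : Sig} (α : Ordinal) {M : Type} (IM : Str σ M) {n : ℕ}
    (a : Fin n → M) : UAInv σ n × (HKey σ n × Ordinal → Option Bool) :=
  ⟨uaInv IM a,
    fun q =>
      if h : q.2 < α then
        some (if (∃ c : Fin q.1.m → M,
            Hfun q.2 IM (Fin.append a c) = Hfun q.2 q.1.IK q.1.st) then true else false)
      else none⟩
termination_by α
decreasing_by all_goals exact h

/-- The type of the invariant functions `F^α` for tuples of length `n`: such an
invariant consists of the `I`-part together with a map sending pairs `(w, β)` with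
`β < α` and `w` an element of the type of `F^β`-invariants for tuples of length
`n + m` (for some finite `m`) to `some true`/`some false` (the values `1`/`0`), or
`none` outside the domain. -/
noncomputable def FTm (σ : Sig) : Ordinal → ℕ → Type 1 :=
  Ordinal.lt_wf.fix fun α ih n =>
    UAInv σ n ×
      ((Σ β : {b : Ordinal // b < α}, Σ m : ℕ, ih β.1 β.2 (n + m)) → Option Bool)

theorem FTm_eq (σ : Sig) (α : Ordinal) (n : ℕ) :
    FTm σ α n =
      (UAInv σ n ×
        ((Σ β : {b : Ordinal // b < α}, Σ m : ℕ, FTm σ β.1 (n + m)) → Option Bool)) := by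
  rw [FTm, WellFounded.fix_eq]

/-- The recursively defined invariants `F^α_{M,ā}`: the base part is `I_{M,ā}`, and
for `β < α` the value at `(F^β_{K,s̄t̄}, β)` is `1` iff there is a tuple `c̄` in `M`
of the length of `t̄` with `F^β_{M,āc̄} = F^β_{K,s̄t̄}`; arguments that are not
`F^β`-invariants of a pair (structure, tuple) are outside the domain (`none`). -/
noncomputable def Ffun {σ : Sig} (α : Ordinal) {M : Type} (IM : Str σ M) {n : ℕ}
    (a : Fin n → M) : FTm σ α n :=
  cast (FTm_eq σ α n).symm
    (⟨uaInv IM a,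
      fun p =>
        if (∃ (K : Type) (IK : Str σ K) (st : Fin (n + p.2.1) → K),
            p.2.2 = Ffun p.1.1 IK st) then
          some (if (∃ c : Fin p.2.1 → M,
              Ffun p.1.1 IM (Fin.append a c) = p.2.2) then true else false)
        else none⟩ :
      UAInv σ n ×
        ((Σ β : {b : Ordinal // b < α}, Σ m : ℕ, FTm σ β.1 (n + m)) → Option Bool))
termination_by α
decreasing_by all_goals exact p.1.2

/-! The equivalence of the two families of invariants is proved by induction on `α`: both
`F^α_{M,ā}` and `H^α_{M,ā}` are determined by `I_{M,ā}` together with their values at the points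
indexed by `(K, s̄t̄, β)` with `β < α`, and at such a point both values say whether some `c̄` makes
the level-`β` invariants of `āc̄` and `s̄t̄` equal, which by the induction hypothesis is the same
condition for `F^β` and for `H^β`. Outside these points both maps are `none`. -/

section Invariants

variable {σ : Sig} {M N : Type} {n : ℕ}

lemma Hfun_eq (α : Ordinal) (IM : Str σ M) (a : Fin n → M) :
    Hfun α IM a = ⟨uaInv IM a,
      fun q =>
        if _ : q.2 < α then
          some (if (∃ c : Fin q.1.m → M,
              Hfun q.2 IM (Fin.append a c) = Hfun q.2 q.1.IK q.1.st) then true else false)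
        else none⟩ := by
  rw [Hfun]

lemma cast_Ffun_eq (α : Ordinal) (IM : Str σ M) (a : Fin n → M) :
    cast (FTm_eq σ α n) (Ffun α IM a) = ⟨uaInv IM a,
      fun p =>
        if (∃ (K : Type) (IK : Str σ K) (st : Fin (n + p.2.1) → K),
            p.2.2 = Ffun p.1.1 IK st) then
          some (if (∃ c : Fin p.2.1 → M,
              Ffun p.1.1 IM (Fin.append a c) = p.2.2) then true else false)
        else none⟩ := by
  rw [Ffun, cast_cast, cast_eq]

lemma Hfun_fst (α : Ordinal) (IM : Str σ M) (a : Fin n → M) :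
    (Hfun α IM a).1 = uaInv IM a := by
  rw [Hfun_eq]

lemma cast_Ffun_fst (α : Ordinal) (IM : Str σ M) (a : Fin n → M) :
    (cast (FTm_eq σ α n) (Ffun α IM a)).1 = uaInv IM a := by
  rw [cast_Ffun_eq]

lemma Hfun_snd_of_lt {α β : Ordinal} (hβ : β < α) (IM : Str σ M) (a : Fin n → M)
    (q : HKey σ n) :
    (Hfun α IM a).2 (q, β) =
      some (if ∃ c : Fin q.m → M, Hfun β IM (Fin.append a c) = Hfun β q.IK q.st
        then true else false) := by
  rw [Hfun_eq]
  exact dif_pos hβ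

lemma Hfun_snd_of_not_lt {α β : Ordinal} (hβ : ¬β < α) (IM : Str σ M) (a : Fin n → M)
    (q : HKey σ n) :
    (Hfun α IM a).2 (q, β) = none := by
  rw [Hfun_eq]
  exact dif_neg hβ

lemma cast_Ffun_snd_Ffun {α β : Ordinal} (hβ : β < α) (IM : Str σ M) (a : Fin n → M)
    {K : Type} (IK : Str σ K) {m : ℕ} (st : Fin (n + m) → K) :
    (cast (FTm_eq σ α n) (Ffun α IM a)).2 ⟨⟨β, hβ⟩, m, Ffun β IK st⟩ =
      some (if ∃ c : Fin m → M, Ffun β IM (Fin.append a c) = Ffun β IK st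
        then true else false) := by
  rw [cast_Ffun_eq]
  exact if_pos ⟨K, IK, st, rfl⟩

lemma cast_Ffun_snd_of_not_exists {α β : Ordinal} (hβ : β < α) (IM : Str σ M)
    (a : Fin n → M) {m : ℕ} {w : FTm σ β (n + m)}
    (hw : ¬∃ (K : Type) (IK : Str σ K) (st : Fin (n + m) → K), w = Ffun β IK st) :
    (cast (FTm_eq σ α n) (Ffun α IM a)).2 ⟨⟨β, hβ⟩, m, w⟩ = none := by
  rw [cast_Ffun_eq]
  exact if_neg hw

lemma Hfun_eq_Hfun_iff (α : Ordinal) (IM : Str σ M) (IN : Str σ N) (a : Fin n → M)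
    (b : Fin n → N) :
    Hfun α IM a = Hfun α IN b ↔ uaInv IM a = uaInv IN b ∧
      ∀ β (_ : β < α) (K : Type) (IK : Str σ K) (m : ℕ) (st : Fin (n + m) → K),
        (Hfun α IM a).2 (⟨K, IK, m, st⟩, β) = (Hfun α IN b).2 (⟨K, IK, m, st⟩, β) := by
  refine ⟨fun h => ⟨by rw [← Hfun_fst α IM, h, Hfun_fst], fun _ _ _ _ _ _ => by rw [h]⟩, ?_⟩
  rintro ⟨hI, hval⟩
  refine Prod.ext (by rw [Hfun_fst, Hfun_fst, hI]) (funext fun ⟨⟨K, IK, m, st⟩, β⟩ => ?_)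
  by_cases hβ : β < α
  · exact hval β hβ K IK m st
  · rw [Hfun_snd_of_not_lt hβ, Hfun_snd_of_not_lt hβ]

lemma Ffun_eq_Ffun_iff (α : Ordinal) (IM : Str σ M) (IN : Str σ N) (a : Fin n → M)
    (b : Fin n → N) :
    Ffun α IM a = Ffun α IN b ↔ uaInv IM a = uaInv IN b ∧
      ∀ β (hβ : β < α) (K : Type) (IK : Str σ K) (m : ℕ) (st : Fin (n + m) → K),
        (cast (FTm_eq σ α n) (Ffun α IM a)).2 ⟨⟨β, hβ⟩, m, Ffun β IK st⟩ =
          (cast (FTm_eq σ α n) (Ffun α IN b)).2 ⟨⟨β, hβ⟩, m, Ffun β IK st⟩ := by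
  rw [← cast_inj (FTm_eq σ α n)]
  refine ⟨fun h => ⟨by rw [← cast_Ffun_fst α IM, h, cast_Ffun_fst],
    fun _ _ _ _ _ _ => by rw [h]⟩, ?_⟩
  rintro ⟨hI, hval⟩
  refine Prod.ext (by rw [cast_Ffun_fst, cast_Ffun_fst, hI])
    (funext fun ⟨⟨β, hβ⟩, m, w⟩ => ?_)
  by_cases hw : ∃ (K : Type) (IK : Str σ K) (st : Fin (n + m) → K), w = Ffun β IK st
  · obtain ⟨K, IK, st, rfl⟩ := hw
    exact hval β hβ K IK m st
  · rw [cast_Ffun_snd_of_not_exists hβ IM a hw, cast_Ffun_snd_of_not_exists hβ IN b hw]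

lemma cast_Ffun_snd_eq_Hfun_snd {α β : Ordinal} (hβ : β < α) (IM : Str σ M) (a : Fin n → M)
    {K : Type} (IK : Str σ K) {m : ℕ} (st : Fin (n + m) → K)
    (hiff : ∀ c : Fin m → M,
      Ffun β IM (Fin.append a c) = Ffun β IK st ↔ Hfun β IM (Fin.append a c) = Hfun β IK st) :
    (cast (FTm_eq σ α n) (Ffun α IM a)).2 ⟨⟨β, hβ⟩, m, Ffun β IK st⟩ =
      (Hfun α IM a).2 (⟨K, IK, m, st⟩, β) := by
  rw [cast_Ffun_snd_Ffun hβ, Hfun_snd_of_lt hβ, exists_congr hiff]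

theorem Ffun_eq_Ffun_iff_Hfun_eq_Hfun (α : Ordinal) (IM : Str σ M) (IN : Str σ N)
    (a : Fin n → M) (b : Fin n → N) :
    Ffun α IM a = Ffun α IN b ↔ Hfun α IM a = Hfun α IN b := by
  induction α using WellFoundedLT.induction generalizing M N n with
  | _ α ih =>
  have hval : ∀ {P : Type} (IP : Str σ P) (p : Fin n → P) β (hβ : β < α) (K : Type)
      (IK : Str σ K) (m : ℕ) (st : Fin (n + m) → K),
      (cast (FTm_eq σ α n) (Ffun α IP p)).2 ⟨⟨β, hβ⟩, m, Ffun β IK st⟩ =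
        (Hfun α IP p).2 (⟨K, IK, m, st⟩, β) := fun IP p β hβ K IK m st =>
    cast_Ffun_snd_eq_Hfun_snd hβ IP p IK st fun c => ih β hβ IP IK (Fin.append p c) st
  rw [Ffun_eq_Ffun_iff, Hfun_eq_Hfun_iff]
  simp only [hval]

end Invariants

/-- Relation between the `F`- and `H`-invariants: for `β < α`, any structure `K` and
tuple `s̄t̄` from `K` (`s̄` of the length of `ā`, `t̄` of finite length `m`),
`F^α_{M,ā}(F^β_{K,s̄t̄}, β) = H^α_{M,ā}(K, s̄t̄, β)`; moreover, for any structure `N`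
and tuple `b̄` from `N` of the length of `ā`, `F^α_{M,ā} = F^α_{N,b̄}` iff
`H^α_{M,ā} = H^α_{N,b̄}`. -/
theorem Ffun_Hfun {σ : Sig} (α β : Ordinal) (hβ : β < α) {M K N : Type}
    (IM : Str σ M) (IK : Str σ K) (IN : Str σ N) (n m : ℕ)
    (a : Fin n → M) (st : Fin (n + m) → K) (b : Fin n → N) :
    ((cast (FTm_eq σ α n) (Ffun α IM a)).2 ⟨⟨β, hβ⟩, m, Ffun β IK st⟩ =
        (Hfun α IM a).2 (⟨K, IK, m, st⟩, β)) ∧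
      (Ffun α IM a = Ffun α IN b ↔ Hfun α IM a = Hfun α IN b) :=
  ⟨cast_Ffun_snd_eq_Hfun_snd hβ IM a IK st fun c =>
      Ffun_eq_Ffun_iff_Hfun_eq_Hfun β IM IK (Fin.append a c) st,
    Ffun_eq_Ffun_iff_Hfun_eq_Hfun α IM IN a b⟩

end
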